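/- For any Lipschitz map f : X → Y between distance spaces, there exists a Lipschitz map g : EX → EY between their injective envelopes such that g ∘ e_X = e_Y ∘ f and Lip(g) ≤ Lip(f). -/

import Mathlib

open scoped ENNReal NNReal

universe u

structure DistSpace (X : Type u) where
  d : X → X → ℝ≥0∞
  refl : ∀ x, d x x = 0
  symm : ∀ x y, d x y = d y x
  triangle : ∀ x y z, d x z ≤ d x y + d y z

def Delta {X : Type u} (D : DistSpace X) : Set (X → ℝ≥0∞) :=
  {f | ∀ x y, D.d x y ≤ f x + f y}

def Extremal {X : Type u} (D : DistSpace X) (f : X → ℝ≥0∞) : Prop :=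
  f ∈ Delta D ∧ ∀ g ∈ Delta D, g ≤ f → g = f

noncomputable def supDist {X : Type u} (f g : X → ℝ≥0∞) : ℝ≥0∞ :=
  ⨆ x, (f x - g x) ⊔ (g x - f x)

theorem extremal_ddist {X : Type u} (D : DistSpace X) (x : X) :
    Extremal D (fun z => D.d x z) := by
  constructor
  · intro y z
    calc D.d y z ≤ D.d y x + D.d x z := D.triangle y x z
    _ = D.d x y + D.d x z := by rw [D.symm y x]
  · intro g hg hle
    funext z
    have hx : g x = 0 := le_antisymm (by simpa [D.refl] using hle x) (by simp)
    have h1 : D.d x z ≤ g z := by simpa [hx] using hg x z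
    exact le_antisymm (hle z) h1

/-- The injective envelope `EX` of a distance space `X`: the set of extremal
functions, with the sup-distance. -/
def EnvType {X : Type u} (D : DistSpace X) : Type u :=
  {f : X → ℝ≥0∞ // Extremal D f}

/-- The canonical isometric embedding `e_X : X → EX`, `x ↦ d_X(x,·)`. -/
noncomputable def eEnv {X : Type u} (D : DistSpace X) (x : X) : EnvType D :=
  ⟨fun z => D.d x z, extremal_ddist D x⟩


lemma le_iInf_add_iInf' {ι κ : Sort*} {a : ℝ≥0∞} {f : ι → ℝ≥0∞} {g : κ → ℝ≥0∞}
    (h : ∀ i j, a ≤ f i + g j) : a ≤ (⨅ i, f i) + ⨅ j, g j := by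
  rw [ENNReal.iInf_add]
  refine le_iInf fun i => ?_
  rw [ENNReal.add_iInf]
  exact le_iInf fun j => h i j

lemma supDist_self {X : Type u} (f : X → ℝ≥0∞) : supDist f f = 0 := by
  simp [supDist]

lemma supDist_comm {X : Type u} (f g : X → ℝ≥0∞) : supDist f g = supDist g f := by
  unfold supDist
  congr 1
  funext x
  exact sup_comm _ _

lemma le_add_supDist {X : Type u} (f g : X → ℝ≥0∞) (x : X) : f x ≤ g x + supDist f g := by
  have h : f x - g x ≤ supDist f g :=
    le_trans le_sup_left (le_iSup (fun x => (f x - g x) ⊔ (g x - f x)) x)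
  rw [add_comm]
  exact tsub_le_iff_right.1 h

lemma supDist_le {X : Type u} {f g : X → ℝ≥0∞} {r : ℝ≥0∞}
    (h1 : ∀ x, f x ≤ g x + r) (h2 : ∀ x, g x ≤ f x + r) : supDist f g ≤ r :=
  iSup_le fun x => sup_le (tsub_le_iff_right.2 (by rw [add_comm]; exact h1 x))
    (tsub_le_iff_right.2 (by rw [add_comm]; exact h2 x))

lemma eq_of_supDist_eq_zero {X : Type u} {f g : X → ℝ≥0∞} (h : supDist f g = 0) : f = g := by
  funext x
  have hx : (f x - g x) ⊔ (g x - f x) ≤ 0 := h ▸ le_iSup (fun x => (f x - g x) ⊔ (g x - f x)) x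
  have h1 : f x - g x = 0 := le_antisymm (le_trans le_sup_left hx) zero_le
  have h2 : g x - f x = 0 := le_antisymm (le_trans le_sup_right hx) zero_le
  exact le_antisymm (tsub_eq_zero_iff_le.1 h1) (tsub_eq_zero_iff_le.1 h2)

lemma supDist_triangle {X : Type u} (f g h : X → ℝ≥0∞) :
    supDist f h ≤ supDist f g + supDist g h := by
  refine supDist_le (fun x => ?_) (fun x => ?_)
  · calc f x ≤ g x + supDist f g := le_add_supDist f g x
      _ ≤ (h x + supDist g h) + supDist f g := add_le_add_left (le_add_supDist g h x) _
      _ = h x + (supDist f g + supDist g h) := by ring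
  · calc h x ≤ g x + supDist h g := le_add_supDist h g x
      _ ≤ (f x + supDist g f) + supDist h g := add_le_add_left (le_add_supDist g f x) _
      _ = f x + (supDist f g + supDist g h) := by
          rw [supDist_comm g f, supDist_comm h g]; ring

lemma supDist_ddist {X : Type u} (D : DistSpace X) (a b : X) :
    supDist (fun z => D.d a z) (fun z => D.d b z) = D.d a b := by
  refine le_antisymm (supDist_le (fun z => ?_) (fun z => ?_)) ?_
  · calc D.d a z ≤ D.d a b + D.d b z := D.triangle a b z
      _ = D.d b z + D.d a b := add_comm _ _
  · calc D.d b z ≤ D.d b a + D.d a z := D.triangle b a z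
      _ = D.d a z + D.d a b := by rw [D.symm b a, add_comm]
  · have h := le_add_supDist (fun z => D.d a z) (fun z => D.d b z) b
    simpa [D.refl] using h

lemma Extremal.eq_sup {X : Type u} {D : DistSpace X} {p : X → ℝ≥0∞}
    (hp : Extremal D p) (y : X) : p y = ⨆ z, D.d y z - p z := by
  classical
  set g : X → ℝ≥0∞ := Function.update p y (⨆ z, D.d y z - p z) with hg
  have hsup_le : (⨆ z, D.d y z - p z) ≤ p y :=
    iSup_le fun z => tsub_le_iff_right.2 (hp.1 y z)
  have hgle : g ≤ p := by
    intro z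
    by_cases hz : z = y
    · subst hz; rw [hg, Function.update_self]; exact hsup_le
    · rw [hg, Function.update_of_ne hz]
  have hkey : ∀ b, b ≠ y → D.d y b ≤ (⨆ z, D.d y z - p z) + p b := by
    intro b _
    calc D.d y b ≤ (D.d y b - p b) + p b := le_tsub_add
      _ ≤ (⨆ z, D.d y z - p z) + p b :=
        add_le_add_left (le_iSup (fun z => D.d y z - p z) b) _
  have hgΔ : g ∈ Delta D := by
    intro a b
    by_cases ha : a = y
    · by_cases hb : b = y
      · rw [ha, hb]; simp [D.refl]
      · rw [ha, hg, Function.update_self, Function.update_of_ne hb]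
        exact hkey b hb
    · by_cases hb : b = y
      · rw [hb, hg, Function.update_of_ne ha, Function.update_self]
        calc D.d a y = D.d y a := D.symm a y
          _ ≤ (⨆ z, D.d y z - p z) + p a := hkey a ha
          _ = p a + ⨆ z, D.d y z - p z := add_comm _ _
      · rw [hg, Function.update_of_ne ha, Function.update_of_ne hb]
        exact hp.1 a b
  have hgp : g = p := hp.2 g hgΔ hgle
  have hy := congrFun hgp y
  rw [hg, Function.update_self] at hy
  exact hy.symm

lemma exists_extremal_le {Y : Type u} (D : DistSpace Y) {w : Y → ℝ≥0∞} (hw : w ∈ Delta D) :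
    ∃ p, Extremal D p ∧ p ≤ w := by
  let s : Set ((Y → ℝ≥0∞)ᵒᵈ) :=
    {g | OrderDual.ofDual g ∈ Delta D ∧ OrderDual.ofDual g ≤ w}
  have ih : ∀ c ⊆ s, IsChain (· ≤ ·) c → ∀ y ∈ c, ∃ ub ∈ s, ∀ z ∈ c, z ≤ ub := by
    intro c hcs hchain y hyc
    set lb : Y → ℝ≥0∞ := fun x => ⨅ g : c, OrderDual.ofDual g.1 x with hlb
    have hlb_le : ∀ g ∈ c, lb ≤ OrderDual.ofDual g := by
      intro g hg x
      exact iInf_le (fun g : c => OrderDual.ofDual g.1 x) ⟨g, hg⟩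
    have hlbΔ : lb ∈ Delta D := by
      intro a b
      refine le_iInf_add_iInf' fun i j => ?_
      rcases eq_or_ne i j with rfl | hij
      · exact (hcs i.2).1 a b
      rcases hchain i.2 j.2 (fun h => hij (Subtype.ext h)) with h | h
      · have h' : OrderDual.ofDual j.1 ≤ OrderDual.ofDual i.1 := h
        calc D.d a b ≤ OrderDual.ofDual j.1 a + OrderDual.ofDual j.1 b := (hcs j.2).1 a b
          _ ≤ OrderDual.ofDual i.1 a + OrderDual.ofDual j.1 b := add_le_add_left (h' a) _
      · have h' : OrderDual.ofDual i.1 ≤ OrderDual.ofDual j.1 := h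
        calc D.d a b ≤ OrderDual.ofDual i.1 a + OrderDual.ofDual i.1 b := (hcs i.2).1 a b
          _ ≤ OrderDual.ofDual i.1 a + OrderDual.ofDual j.1 b := add_le_add_right (h' b) _
    refine ⟨OrderDual.toDual lb, ⟨hlbΔ, le_trans (hlb_le y hyc) (hcs hyc).2⟩, ?_⟩
    intro z hz
    exact hlb_le z hz
  obtain ⟨m, hwm, hm⟩ := zorn_le_nonempty₀ s ih (OrderDual.toDual w) ⟨hw, le_rfl⟩
  refine ⟨OrderDual.ofDual m, ⟨hm.1.1, fun g hg hgle => ?_⟩, hm.1.2⟩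
  have hgs : OrderDual.toDual g ∈ s := ⟨hg, le_trans hgle hm.1.2⟩
  exact le_antisymm hgle (hm.2 hgs hgle)

lemma hyperconvex {Y : Type u} (D : DistSpace Y) {ι : Sort*} (p : ι → Y → ℝ≥0∞)
    (hp : ∀ i, Extremal D (p i)) (r : ι → ℝ≥0∞)
    (hr : ∀ i j, supDist (p i) (p j) ≤ r i + r j) :
    ∃ q, Extremal D q ∧ ∀ i, supDist q (p i) ≤ r i := by
  set h : Y → ℝ≥0∞ := fun y => ⨅ i, (r i + p i y) with hh
  have hΔ : h ∈ Delta D := by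
    intro a b
    refine le_iInf_add_iInf' fun i j => ?_
    calc D.d a b ≤ p j a + p j b := (hp j).1 a b
      _ ≤ (p i a + supDist (p j) (p i)) + p j b :=
          add_le_add_left (le_add_supDist (p j) (p i) a) _
      _ ≤ (p i a + (r i + r j)) + p j b := by
          rw [supDist_comm]
          exact add_le_add_left (add_le_add_right (hr i j) _) _
      _ = (r i + p i a) + (r j + p j b) := by ring
  obtain ⟨q, hq, hqle⟩ := exists_extremal_le D hΔ
  refine ⟨q, hq, fun i => ?_⟩
  refine supDist_le (fun y => ?_) (fun y => ?_)
  · calc q y ≤ h y := hqle y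
      _ ≤ r i + p i y := iInf_le (fun i => r i + p i y) i
      _ = p i y + r i := add_comm _ _
  · rw [(hp i).eq_sup y]
    refine iSup_le fun z => ?_
    have h0 := hq.1 y z
    have h1 : D.d y z - q z ≤ q y := tsub_le_iff_right.2 h0
    have h2 : q z ≤ r i + p i z := (hqle z).trans (iInf_le (fun i => r i + p i z) i)
    calc D.d y z - p i z ≤ (D.d y z - (r i + p i z)) + r i := by
          rw [show D.d y z - (r i + p i z) = D.d y z - p i z - r i by
            rw [tsub_tsub, add_comm]]
          exact le_tsub_add
      _ ≤ (D.d y z - q z) + r i := add_le_add_left (tsub_le_tsub_left h2 _) _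
      _ ≤ q y + r i := add_le_add_left h1 _

/-- Any Lipschitz map `f : X → Y` between distance spaces extends to a Lipschitz
map `g : EX → EY` of the injective envelopes with `g ∘ e_X = e_Y ∘ f` and
`Lip(g) ≤ Lip(f)` (i.e., every Lipschitz constant of `f` works for `g`). -/
theorem stmt9 {X Y : Type u} (DX : DistSpace X) (DY : DistSpace Y) (f : X → Y)
    (hf : ∃ L : ℝ≥0, ∀ x y, DY.d (f x) (f y) ≤ (L : ℝ≥0∞) * DX.d x y) :
    ∃ g : EnvType DX → EnvType DY,
      (∀ x, g (eEnv DX x) = eEnv DY (f x)) ∧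
      ∀ L : ℝ≥0∞, (∀ x y, DY.d (f x) (f y) ≤ L * DX.d x y) →
        ∀ u v : EnvType DX, supDist (g u).1 (g v).1 ≤ L * supDist u.1 v.1 := by
  classical
  obtain ⟨L₀, hL₀⟩ := hf
  let S : Set ℝ≥0∞ := {L | ∀ x y, DY.d (f x) (f y) ≤ L * DX.d x y}
  have hL₀S : (L₀ : ℝ≥0∞) ∈ S := hL₀
  let C : Set (Set (EnvType DX × EnvType DY)) :=
    {G | (∀ x, (eEnv DX x, eEnv DY (f x)) ∈ G) ∧
         ∀ a ∈ G, ∀ b ∈ G, ∀ L ∈ S, supDist a.2.1 b.2.1 ≤ L * supDist a.1.1 b.1.1}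
  have hG0 : {q | ∃ x, q = (eEnv DX x, eEnv DY (f x))} ∈ C := by
    constructor
    · intro x; exact ⟨x, rfl⟩
    · rintro a ⟨x, rfl⟩ b ⟨x', rfl⟩ L hL
      have e1 : supDist (eEnv DY (f x)).1 (eEnv DY (f x')).1 = DY.d (f x) (f x') :=
        supDist_ddist DY (f x) (f x')
      have e2 : supDist (eEnv DX x).1 (eEnv DX x').1 = DX.d x x' := supDist_ddist DX x x'
      calc supDist (eEnv DY (f x)).1 (eEnv DY (f x')).1 = DY.d (f x) (f x') := e1
        _ ≤ L * DX.d x x' := hL x x'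
        _ = L * supDist (eEnv DX x).1 (eEnv DX x').1 := by rw [e2]
  have hchainub : ∀ c ⊆ C, IsChain (· ⊆ ·) c → c.Nonempty →
      ∃ ub ∈ C, ∀ s ∈ c, s ⊆ ub := by
    rintro c hcC hchain ⟨G1, hG1⟩
    refine ⟨⋃₀ c, ⟨?_, ?_⟩, fun s hs => Set.subset_sUnion_of_mem hs⟩
    · intro x; exact ⟨G1, hG1, (hcC hG1).1 x⟩
    · rintro a ⟨Ga, hGa, haGa⟩ b ⟨Gb, hGb, hbGb⟩ L hL
      rcases hchain.total hGa hGb with h | h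
      · exact (hcC hGb).2 a (h haGa) b hbGb L hL
      · exact (hcC hGa).2 a haGa b (h hbGb) L hL
  obtain ⟨M, hG0M, hMmax⟩ := zorn_subset_nonempty C hchainub _ hG0
  have hMC : M ∈ C := hMmax.1
  have htot : ∀ u : EnvType DX, ∃ q : EnvType DY, (u, q) ∈ M := by
    by_contra hcon
    push_neg at hcon
    obtain ⟨u, hu⟩ := hcon
    have hcompat : ∀ a b : M,
        supDist a.1.2.1 b.1.2.1 ≤ (⨅ L : S, (L : ℝ≥0∞) * supDist u.1 a.1.1.1) +
          ⨅ L : S, (L : ℝ≥0∞) * supDist u.1 b.1.1.1 := by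
      intro a b
      refine le_iInf_add_iInf' fun L L' => ?_
      set L'' := min L.1 L'.1 with hL''
      have hL''S : L'' ∈ S := by
        rcases le_total L.1 L'.1 with h | h
        · rw [hL'', min_eq_left h]; exact L.2
        · rw [hL'', min_eq_right h]; exact L'.2
      calc supDist a.1.2.1 b.1.2.1 ≤ L'' * supDist a.1.1.1 b.1.1.1 :=
            hMC.2 a.1 a.2 b.1 b.2 L'' hL''S
        _ ≤ L'' * (supDist a.1.1.1 u.1 + supDist u.1 b.1.1.1) :=
            mul_le_mul_right (supDist_triangle _ _ _) _
        _ = L'' * supDist u.1 a.1.1.1 + L'' * supDist u.1 b.1.1.1 := by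
            rw [mul_add, supDist_comm a.1.1.1 u.1]
        _ ≤ L.1 * supDist u.1 a.1.1.1 + L'.1 * supDist u.1 b.1.1.1 :=
            add_le_add (mul_le_mul_left (min_le_left _ _) _)
              (mul_le_mul_left (min_le_right _ _) _)
    obtain ⟨q, hq, hqr⟩ := hyperconvex DY (fun a : M => a.1.2.1) (fun a => a.1.2.2)
      (fun a => ⨅ L : S, (L : ℝ≥0∞) * supDist u.1 a.1.1.1) hcompat
    have hM' : insert (u, (⟨q, hq⟩ : EnvType DY)) M ∈ C := by
      refine ⟨fun x => Set.mem_insert_of_mem _ (hMC.1 x), ?_⟩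
      intro a ha b hb L hL
      rcases Set.mem_insert_iff.1 ha with rfl | haM
      · rcases Set.mem_insert_iff.1 hb with rfl | hbM
        · rw [supDist_self]; exact zero_le
        · calc supDist q b.2.1 ≤ ⨅ L : S, (L : ℝ≥0∞) * supDist u.1 b.1.1 := hqr ⟨b, hbM⟩
            _ ≤ L * supDist u.1 b.1.1 :=
              iInf_le (fun L : S => (L : ℝ≥0∞) * supDist u.1 b.1.1) ⟨L, hL⟩
      · rcases Set.mem_insert_iff.1 hb with rfl | hbM
        · rw [supDist_comm a.2.1 q, supDist_comm a.1.1 u.1]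
          calc supDist q a.2.1 ≤ ⨅ L : S, (L : ℝ≥0∞) * supDist u.1 a.1.1 := hqr ⟨a, haM⟩
            _ ≤ L * supDist u.1 a.1.1 :=
              iInf_le (fun L : S => (L : ℝ≥0∞) * supDist u.1 a.1.1) ⟨L, hL⟩
        · exact hMC.2 a haM b hbM L hL
    have hsub : insert (u, (⟨q, hq⟩ : EnvType DY)) M ⊆ M :=
      hMmax.2 hM' (Set.subset_insert _ _)
    exact hu ⟨q, hq⟩ (hsub (Set.mem_insert _ _))
  choose gf hgf using htot
  refine ⟨gf, ?_, ?_⟩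
  · intro x
    have h3 := hMC.2 _ (hgf (eEnv DX x)) _ (hMC.1 x) (L₀ : ℝ≥0∞) hL₀S
    rw [supDist_self] at h3
    have h4 : supDist (gf (eEnv DX x)).1 (eEnv DY (f x)).1 = 0 :=
      le_antisymm (by simpa using h3) zero_le
    exact Subtype.ext (eq_of_supDist_eq_zero h4)
  · intro L hL u v
    exact hMC.2 _ (hgf u) _ (hgf v) L hL
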